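/- arXiv:1706.04691 — 3 statements merged into one kernel-verified Lean document; each statement's English description precedes it below -/
import Mathlib

section
/- The commensurator N_G[H] of the infinite cyclic subgroup H generated by a nontrivial translation A = (1,t;0,1) in G = PSL_2(O_k) consists exactly of the (classes of) translations (1, s; 0, 1), s ∈ O_k, and hence is isomorphic to ℤ^n where n = [k : ℚ]. In particular N_G[H] = N_G(H). -/
/-!
Write `g = [B]` with `B = (a b; c d)`. Conjugating the translation by `u` gives
`(1 - acu, a²u; -c²u, 1 + acu)`, which is `±(1 v; 0 1)` only if `c = 0` and `v = a²u`. For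
`u = n t`, `v = m t` this makes `a` a unit of `O_k` whose square `m / n` is rational, hence
`a² = ±1`, and `a² = -1` is impossible since `k` embeds in `ℝ`. So `B = ±(1 ab; 0 1)` is a
translation. Conversely translations commute with `A`, hence normalize `⟨A⟩`, and since `A ≠ 1`
every element normalizing `⟨A⟩` commensurates it. The translations form a copy of
`(O_k, +) ≅ ℤⁿ`.
-/

open Matrix MatrixGroups

namespace Subgroup

variable {G : Type*} [Group G] {a g : G}

theorem mem_normalizer_zpowers_of_commute (h : Commute g a) :
    g ∈ normalizer (zpowers a : Set G) :=
  centralizer_le_normalizer _ <| mem_centralizer_iff.mpr <| by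
    rintro _ ⟨k, rfl⟩
    exact (h.zpow_right k).eq.symm

theorem exists_conj_zpow_eq_zpow_of_mem_normalizer_zpowers (ha : a ≠ 1)
    (hg : g ∈ normalizer (zpowers a : Set G)) :
    ∃ n m : ℤ, n ≠ 0 ∧ m ≠ 0 ∧ g * a ^ n * g⁻¹ = a ^ m := by
  obtain ⟨m, hm : a ^ m = g * a * g⁻¹⟩ := (mem_set_normalizer_iff.mp hg a).mp (mem_zpowers a)
  refine ⟨1, m, one_ne_zero, ?_, by rw [zpow_one, hm]⟩
  rintro rfl
  rw [zpow_zero, eq_comm, mul_inv_eq_one, mul_eq_left] at hm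
  exact ha hm

end Subgroup

namespace Matrix.SpecialLinearGroup

variable {R : Type*} [CommRing R]

theorem mk_eq_mk_iff {n : Type*} [Fintype n] [DecidableEq n] {A B : SpecialLinearGroup n R} :
    (A : ProjectiveSpecialLinearGroup n R) = B ↔
      ∃ r : R, r ^ Fintype.card n = 1 ∧ (B : Matrix n n R) = r • (A : Matrix n n R) := by
  rw [QuotientGroup.eq, mem_center_iff]
  refine exists_congr fun r ↦ and_congr_right fun _ ↦ ⟨fun h ↦ ?_, fun h ↦ ?_⟩
  · rw [← mul_inv_cancel_left A B, coe_mul, ← h, scalar_apply, smul_eq_mul_diagonal]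
  · rw [coe_mul, h, Matrix.mul_smul, coe_inv, adjugate_mul, A.2, one_smul,
      smul_one_eq_diagonal, scalar_apply]

def translation : Multiplicative R →* SL(2, R) where
  toFun s := ⟨!![1, s.toAdd; 0, 1], by simp [det_fin_two_of]⟩
  map_one' := Subtype.ext <| by simp [one_fin_two]
  map_mul' s u := Subtype.ext <| by
    change _ = !![1, s.toAdd; 0, 1] * !![1, u.toAdd; 0, 1]
    simp [add_comm]

theorem coe_translation (s : Multiplicative R) :
    (translation s : Matrix (Fin 2) (Fin 2) R) = !![1, s.toAdd; 0, 1] := rfl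

theorem coe_conj_translation (B : SL(2, R)) (u : R) :
    (↑(B * translation (.ofAdd u) * B⁻¹) : Matrix (Fin 2) (Fin 2) R) =
      !![1 - B 0 0 * B 1 0 * u, B 0 0 ^ 2 * u; -(B 1 0 ^ 2 * u), 1 + B 0 0 * B 1 0 * u] := by
  have hdet : B 0 0 * B 1 1 - B 0 1 * B 1 0 = 1 := by rw [← det_fin_two, B.2]
  rw [coe_mul, coe_mul, coe_inv, adjugate_fin_two, coe_translation, eta_fin_two (B : Matrix _ _ R),
    mul_fin_two, mul_fin_two]
  simp only [of_apply, cons_val', cons_val_zero, cons_val_one, empty_val', cons_val_fin_one,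
    toAdd_ofAdd]
  congrm !![?_, ?_; ?_, ?_]
  · linear_combination hdet
  · ring
  · ring
  · linear_combination hdet

theorem eq_zero_and_sq_mul_eq_of_mk_conj_translation_eq [IsDomain R] {B : SL(2, R)} {u v : R}
    (hu : u ≠ 0)
    (h : ((B * translation (.ofAdd u) * B⁻¹ : SL(2, R)) : PSL(2, R)) = translation (.ofAdd v)) :
    B 1 0 = 0 ∧ B 0 0 ^ 2 * u = v := by
  obtain ⟨r, hr, hv⟩ := mk_eq_mk_iff.mp h
  rw [Fintype.card_fin] at hr
  rw [coe_conj_translation, coe_translation, toAdd_ofAdd] at hv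
  have e00 : 1 = r * (1 - B 0 0 * B 1 0 * u) := congrFun₂ hv 0 0
  have e01 : v = r * (B 0 0 ^ 2 * u) := congrFun₂ hv 0 1
  have e10 : 0 = r * -(B 1 0 ^ 2 * u) := congrFun₂ hv 1 0
  have hr0 : r ≠ 0 := by rintro rfl; simp at hr
  have hc : B 1 0 = 0 := by simpa [hr0, hu] using e10
  have hr1 : r = 1 := by simpa [hc] using e00.symm
  exact ⟨hc, by rw [e01, hr1, one_mul]⟩

theorem mul_eq_one_of_eq_zero {B : SL(2, R)} (hc : B 1 0 = 0) : B 0 0 * B 1 1 = 1 := by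
  simpa [hc] using (det_fin_two (B : Matrix _ _ R)).symm.trans B.2

theorem mk_eq_translation_of_eq_zero_of_sq_eq_one {B : SL(2, R)} (hc : B 1 0 = 0)
    (ha : B 0 0 ^ 2 = 1) : (B : PSL(2, R)) = translation (.ofAdd (B 0 0 * B 0 1)) := by
  have hdet := mul_eq_one_of_eq_zero hc
  refine mk_eq_mk_iff.mpr ⟨B 0 0, by rwa [Fintype.card_fin], ?_⟩
  ext i j
  fin_cases i <;> fin_cases j <;> simp [coe_translation, hc, hdet, ← sq, ha]

end Matrix.SpecialLinearGroup

namespace Matrix.ProjectiveSpecialLinearGroup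

variable {R : Type*} [CommRing R]

def translation : Multiplicative R →* PSL(2, R) :=
  (QuotientGroup.mk' _).comp SpecialLinearGroup.translation

theorem translation_injective : Function.Injective (translation (R := R)) := by
  intro s u h
  obtain ⟨r, -, hr⟩ := SpecialLinearGroup.mk_eq_mk_iff.mp h
  rw [SpecialLinearGroup.coe_translation, SpecialLinearGroup.coe_translation] at hr
  have e00 : 1 = r * 1 := congrFun₂ hr 0 0
  have e01 : u.toAdd = r * s.toAdd := congrFun₂ hr 0 1
  exact Multiplicative.toAdd.injective (by linear_combination s.toAdd * e00 - e01)

theorem mem_range_translation_iff {g : PSL(2, R)} :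
    g ∈ translation.range ↔
      ∃ s : R, ∃ B : SL(2, R), (B : Matrix (Fin 2) (Fin 2) R) = !![1, s; 0, 1] ∧ g = B := by
  constructor
  · rintro ⟨s, rfl⟩
    exact ⟨s.toAdd, SpecialLinearGroup.translation s, rfl, rfl⟩
  · rintro ⟨s, B, hB, rfl⟩
    exact ⟨.ofAdd s, congrArg _ (Subtype.ext hB).symm⟩

end Matrix.ProjectiveSpecialLinearGroup

namespace NumberField.RingOfIntegers

variable {K : Type*} [Field K] [NumberField K]

theorem exists_intCast_eq_of_intCast_mul_eq {x : 𝓞 K} {n m : ℤ} (hn : n ≠ 0)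
    (h : (n : 𝓞 K) * x = m) : ∃ z : ℤ, x = z := by
  have hK := congrArg (algebraMap (𝓞 K) K) h
  rw [map_mul, map_intCast, map_intCast] at hK
  have hx : algebraMap (𝓞 K) K x = algebraMap ℚ K (m / n) := by
    rw [map_div₀, map_intCast, map_intCast, eq_div_iff (Int.cast_ne_zero.mpr hn), mul_comm, hK]
  obtain ⟨z, hz⟩ := IsIntegrallyClosed.isIntegral_iff.mp <|
    (isIntegral_algebraMap_iff (algebraMap ℚ K).injective).mp (hx ▸ x.isIntegral_coe)
  refine ⟨z, coe_injective ?_⟩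
  rw [hx, ← hz]
  simp

theorem isUnit_intCast_iff {z : ℤ} : IsUnit (z : 𝓞 K) ↔ IsUnit z := by
  refine ⟨fun h ↦ ?_, IsUnit.map (Int.castRingHom _)⟩
  have := h.map (Algebra.norm ℤ)
  rwa [← eq_intCast (algebraMap ℤ (𝓞 K)), Algebra.norm_algebraMap,
    isUnit_pow_iff Module.finrank_pos.ne'] at this

theorem sq_eq_one_of_intCast_mul_sq_eq (f : K →+* ℝ) {a : 𝓞 K} (ha : IsUnit a) {n m : ℤ}
    (hn : n ≠ 0) (h : (n : 𝓞 K) * a ^ 2 = m) : a ^ 2 = 1 := by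
  obtain ⟨z, hz⟩ := exists_intCast_eq_of_intCast_mul_eq hn h
  have hfz : f (algebraMap (𝓞 K) K a) ^ 2 = z := by
    rw [← map_pow, ← map_pow, hz, map_intCast, map_intCast]
  rcases Int.isUnit_iff.mp (isUnit_intCast_iff.mp (hz ▸ ha.pow 2)) with rfl | rfl
  · simpa using hz
  · push_cast at hfz
    nlinarith [sq_nonneg (f (algebraMap (𝓞 K) K a))]

end NumberField.RingOfIntegers

open NumberField

namespace Matrix.ProjectiveSpecialLinearGroup

variable {K : Type*} [Field K] [NumberField K]

theorem mem_range_translation_of_conj_zpow_eq_zpow (f : K →+* ℝ) {t : 𝓞 K} (ht : t ≠ 0)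
    {g : PSL(2, 𝓞 K)} {n m : ℤ} (hn : n ≠ 0)
    (h : g * translation (.ofAdd t) ^ n * g⁻¹ = translation (.ofAdd t) ^ m) :
    g ∈ translation.range := by
  obtain ⟨B, rfl⟩ := QuotientGroup.mk_surjective g
  rw [← map_zpow, ← ofAdd_zsmul, ← map_zpow, ← ofAdd_zsmul] at h
  obtain ⟨hc, ha⟩ :=
    SpecialLinearGroup.eq_zero_and_sq_mul_eq_of_mk_conj_translation_eq (smul_ne_zero hn ht) h
  have hunit : IsUnit (B 0 0) := .of_mul_eq_one _ (SpecialLinearGroup.mul_eq_one_of_eq_zero hc)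
  have hnm : (n : 𝓞 K) * B 0 0 ^ 2 = m := by
    rw [zsmul_eq_mul, zsmul_eq_mul] at ha
    exact mul_right_cancel₀ ht (by linear_combination ha)
  exact ⟨_, (SpecialLinearGroup.mk_eq_translation_of_eq_zero_of_sq_eq_one hc
    (RingOfIntegers.sq_eq_one_of_intCast_mul_sq_eq f hunit hn hnm)).symm⟩

end Matrix.ProjectiveSpecialLinearGroup

open NumberField Matrix Matrix.ProjectiveSpecialLinearGroup Subgroup in
/-- The commensurator `N_G[H]` of the infinite cyclic subgroup `H` generated by (the
class of) a nontrivial translation `A = (1 t; 0 1)` in `G = PSL₂(O_k)` (`k` totally real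
of degree `n` over `ℚ`) consists exactly of the classes of translations `(1 s; 0 1)`,
`s ∈ O_k`; it coincides with the normalizer `N_G(H)` and is isomorphic to `ℤⁿ`. -/
theorem commensurator_of_parabolic (K : Type) [Field K] [NumberField K] (f : K →+* ℝ)
    (t : NumberField.RingOfIntegers K) (ht : t ≠ 0)
    (A : Matrix.SpecialLinearGroup (Fin 2) (NumberField.RingOfIntegers K))
    (hA : (A : Matrix (Fin 2) (Fin 2) (NumberField.RingOfIntegers K)) = !![1, t; 0, 1]) :
    let p := QuotientGroup.mk'
      (Subgroup.center (Matrix.SpecialLinearGroup (Fin 2) (NumberField.RingOfIntegers K)))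
    let α : Matrix.ProjectiveSpecialLinearGroup (Fin 2) (NumberField.RingOfIntegers K) := p A
    -- the commensurator is exactly the set of classes of translations …
    ({g : Matrix.ProjectiveSpecialLinearGroup (Fin 2) (NumberField.RingOfIntegers K) |
        ∃ n m : ℤ, n ≠ 0 ∧ m ≠ 0 ∧ g * α ^ n * g⁻¹ = α ^ m} =
      {g : Matrix.ProjectiveSpecialLinearGroup (Fin 2) (NumberField.RingOfIntegers K) |
        ∃ s : NumberField.RingOfIntegers K,
          ∃ B : Matrix.SpecialLinearGroup (Fin 2) (NumberField.RingOfIntegers K),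
            (B : Matrix (Fin 2) (Fin 2) (NumberField.RingOfIntegers K)) = !![1, s; 0, 1] ∧
            g = p B}) ∧
    -- … it coincides with the normalizer N_G(H) …
    ({g : Matrix.ProjectiveSpecialLinearGroup (Fin 2) (NumberField.RingOfIntegers K) |
        ∃ n m : ℤ, n ≠ 0 ∧ m ≠ 0 ∧ g * α ^ n * g⁻¹ = α ^ m} =
      ((Subgroup.normalizer (Subgroup.zpowers α : Set (Matrix.ProjectiveSpecialLinearGroup (Fin 2) (NumberField.RingOfIntegers K)))) :
        Set (Matrix.ProjectiveSpecialLinearGroup (Fin 2) (NumberField.RingOfIntegers K)))) ∧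
    -- … and it is isomorphic to ℤⁿ with n = [k : ℚ].
    Nonempty ((Subgroup.normalizer (Subgroup.zpowers α : Set (Matrix.ProjectiveSpecialLinearGroup (Fin 2) (NumberField.RingOfIntegers K)))) ≃*
      Multiplicative (Fin (Module.finrank ℚ K) → ℤ)) := by
  intro p α
  have hα : α = translation (.ofAdd t) := congrArg p (Subtype.ext hA)
  have hα1 : α ≠ 1 := by
    rw [hα, ← map_one translation]
    exact translation_injective.ne (by simpa using ht)
  have commensurator_le : ∀ g, (∃ n m : ℤ, n ≠ 0 ∧ m ≠ 0 ∧ g * α ^ n * g⁻¹ = α ^ m) →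
      g ∈ (translation : Multiplicative (𝓞 K) →* _).range := by
    rintro g ⟨n, m, hn, -, h⟩
    exact mem_range_translation_of_conj_zpow_eq_zpow f ht hn (hα ▸ h)
  have range_le : translation.range ≤ normalizer (zpowers α : Set PSL(2, 𝓞 K)) := by
    rintro _ ⟨s, rfl⟩
    exact mem_normalizer_zpowers_of_commute (hα ▸ (Commute.all s _).map _)
  have normalizer_le := fun g ↦ exists_conj_zpow_eq_zpow_of_mem_normalizer_zpowers (g := g) hα1
  have hrange : translation.range = normalizer (zpowers α : Set PSL(2, 𝓞 K)) :=
    range_le.antisymm fun g hg ↦ commensurator_le g (normalizer_le g hg)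
  refine ⟨?_, ?_, ?_⟩
  · ext g
    exact ⟨fun hg ↦ mem_range_translation_iff.mp (commensurator_le g hg),
      fun hg ↦ normalizer_le g (range_le (mem_range_translation_iff.mpr hg))⟩
  · ext g
    exact ⟨fun hg ↦ hrange ▸ commensurator_le g hg, normalizer_le g⟩
  · let basis := Module.finBasisOfFinrankEq ℤ (𝓞 K) (RingOfIntegers.rank K)
    exact ⟨(MulEquiv.subgroupCongr hrange).symm.trans <|
      (MonoidHom.ofInjective translation_injective).symm.trans <|
        AddEquiv.toMultiplicative basis.equivFun.toAddEquiv⟩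
end

section
/- Every virtually cyclic group is either finite, or surjects onto ℤ with finite kernel, or surjects onto the infinite dihedral group D_∞ with finite kernel. -/
/-!
The normal core of the cyclic subgroup of finite index is a normal subgroup `⟨g⟩ ≅ ℤ` of finite
index, and every element conjugates `g` to `g` or `g⁻¹`.

If `g` is central, the transfer `G → ⟨g⟩` restricts to `x ↦ x ^ [G : ⟨g⟩]` on `⟨g⟩`, so its
kernel meets `⟨g⟩` trivially and is finite, and its image is infinite cyclic.

Otherwise the centralizer `C` of `g` has index two. The central case gives `ψ : C ↠ ℤ` with
finite kernel. Conjugation by some `t ∉ C` negates `ψ` on `⟨g⟩`, hence on all of `C` since `ℤ` is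
torsion-free, so `c ↦ r (ψ c)`, `t * c ↦ sr (ψ c)` is a homomorphism onto `D_∞` with finite kernel.
-/

open Subgroup Function

section

variable {G : Type*} [Group G]

theorem Subgroup.finite_of_disjoint_of_finiteIndex {H K : Subgroup G} [H.FiniteIndex]
    (h : Disjoint H K) : Finite K := by
  refine Finite.of_injective (fun k : K => (k : G ⧸ H)) fun a b hab => ?_
  rw [QuotientGroup.eq] at hab
  exact Subtype.ext (inv_mul_eq_one.mp (disjoint_def.mp h hab (K.mul_mem (K.inv_mem a.2) b.2)))

theorem MonoidHom.eq_one_of_finiteIndex_le_ker {A : Type*} [Group A] [IsMulTorsionFree A]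
    {H : Subgroup G} [H.FiniteIndex] {χ : G →* A} (h : H ≤ χ.ker) : χ = 1 := by
  have := finiteIndex_of_le h
  ext x
  have hx : χ x ^ χ.ker.index = 1 := by rw [← map_pow]; exact χ.ker.pow_index_mem x
  exact (pow_eq_one_iff_left FiniteIndex.index_ne_zero).mp hx

theorem MonoidHom.map_eq_inv_of_zpowers_finiteIndex {A : Type*} [CommGroup A]
    [IsMulTorsionFree A] (ψ : G →* A) (σ : G →* G) {g : G} [(zpowers g).FiniteIndex]
    (hg : ψ (σ g) = (ψ g)⁻¹) (x : G) : ψ (σ x) = (ψ x)⁻¹ := by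
  have : ψ * ψ.comp σ = 1 := MonoidHom.eq_one_of_finiteIndex_le_ker (H := zpowers g) <|
    zpowers_le.mpr (by simp [MonoidHom.mem_ker, hg])
  simpa [eq_inv_iff_mul_eq_one, mul_comm] using DFunLike.congr_fun this x

theorem MonoidHom.exists_surjective_int_ker_eq [Infinite G] {A : Type*} [Group A] [IsCyclic A]
    (χ : G →* A) [Finite χ.ker] :
    ∃ ψ : G →* Multiplicative ℤ, Surjective ψ ∧ ψ.ker = χ.ker := by
  have : Infinite χ.range := by
    refine not_finite_iff_infinite.mp fun hr => ?_
    have : Finite G := χ.finite_iff_finite_ker_range.mpr ⟨‹_›, hr⟩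
    exact not_finite G
  let e : Multiplicative ℤ ≃* χ.range := intCyclicMulEquiv
  refine ⟨(e.symm : χ.range →* Multiplicative ℤ).comp χ.rangeRestrict,
    e.symm.surjective.comp χ.rangeRestrict_surjective, ?_⟩
  rw [MonoidHom.ker_mulEquiv_comp, χ.ker_rangeRestrict]

open scoped IsMulCommutative in
theorem exists_surjective_int_finite_ker_of_mem_center {g : G} (hg : ¬IsOfFinOrder g)
    (hgc : g ∈ center G) [(zpowers g).FiniteIndex] :
    ∃ ψ : G →* Multiplicative ℤ, Surjective ψ ∧ Finite ψ.ker := by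
  let τ : G →* zpowers g := MonoidHom.transfer (MonoidHom.id (zpowers g))
  have hτ : (τ g : G) = g ^ (zpowers g).index := by
    rw [MonoidHom.transfer_eq_pow _ g fun k x _ => by
      rw [mul_assoc, ← mem_center_iff.mp (pow_mem hgc k) x, inv_mul_cancel_left]]
    rfl
  have hinj := injective_zpow_iff_not_isOfFinOrder.mpr hg
  have : Disjoint (zpowers g) τ.ker := by
    rw [disjoint_def]
    rintro _ ⟨k, rfl⟩ hk
    have : g ^ (((zpowers g).index : ℤ) * k) = g ^ (0 : ℤ) := by
      rw [zpow_mul, zpow_natCast, ← hτ, ← coe_zpow, ← map_zpow, hk]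
      simp
    have hk0 : k = 0 := by
      simpa [FiniteIndex.index_ne_zero] using hinj this
    simp [hk0]
  have := finite_of_disjoint_of_finiteIndex this
  have : Infinite G := Infinite.of_injective _ hinj
  obtain ⟨ψ, hψ, hker⟩ := τ.exists_surjective_int_ker_eq
  exact ⟨ψ, hψ, hker ▸ ‹_›⟩

theorem exists_zpowers_normal_finiteIndex_of_isCyclic [Infinite G] (H : Subgroup G)
    [IsCyclic H] [H.FiniteIndex] :
    ∃ g : G, ¬IsOfFinOrder g ∧ (zpowers g).Normal ∧ (zpowers g).FiniteIndex := by
  have : IsCyclic H.normalCore := isCyclic_of_le H.normalCore_le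
  obtain ⟨g, hg⟩ := H.normalCore.isCyclic_iff_exists_zpowers_eq_top.mp this
  refine ⟨g, fun h => ?_, hg ▸ inferInstance, hg ▸ inferInstance⟩
  have : (zpowers g).FiniteIndex := hg ▸ inferInstance
  have : Finite (zpowers g) := (finite_zpowers.mpr h).to_subtype
  have : Finite G := (finite_iff_finite_and_finiteIndex (zpowers g)).mpr ⟨‹_›, ‹_›⟩
  exact not_finite G

theorem conj_eq_or_eq_inv_of_zpowers_normal {g : G} (hg : ¬IsOfFinOrder g)
    [hN : (zpowers g).Normal] (v : G) : v * g * v⁻¹ = g ∨ v * g * v⁻¹ = g⁻¹ := by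
  obtain ⟨k, hk⟩ := mem_zpowers_iff.mp (hN.conj_mem g (mem_zpowers g) v)
  obtain ⟨l, hl⟩ := mem_zpowers_iff.mp (hN.conj_mem g (mem_zpowers g) v⁻¹)
  have hkl : g ^ (k * l) = g ^ (1 : ℤ) := by
    rw [zpow_mul, hk, conj_zpow, hl]
    group
  rcases Int.eq_one_or_neg_one_of_mul_eq_one
    (injective_zpow_iff_not_isOfFinOrder.mpr hg hkl) with rfl | rfl
  · exact .inl (by simpa using hk.symm)
  · exact .inr (by simpa using hk.symm)

theorem mem_centralizer_singleton_iff_conj_eq {g v : G} :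
    v ∈ centralizer {g} ↔ v * g * v⁻¹ = g := by
  rw [mem_centralizer_singleton_iff, mul_inv_eq_iff_eq_mul]

theorem conj_eq_inv_of_notMem_centralizer {g : G} (hg : ¬IsOfFinOrder g)
    [(zpowers g).Normal] {v : G} (hv : v ∉ centralizer {g}) : v * g * v⁻¹ = g⁻¹ :=
  (conj_eq_or_eq_inv_of_zpowers_normal hg v).resolve_left
    (mt mem_centralizer_singleton_iff_conj_eq.mpr hv)

theorem index_centralizer_eq_two {g : G} (hg : ¬IsOfFinOrder g)
    [(zpowers g).Normal] {t : G} (ht : t ∉ centralizer {g}) : (centralizer {g}).index = 2 := by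
  have hne : g⁻¹ ≠ g := fun h => hg (isOfFinOrder_iff_pow_eq_one.mpr ⟨2, two_pos, by
    rw [pow_two]; nth_rewrite 1 [← h]; exact inv_mul_cancel g⟩)
  refine index_eq_two_iff'.mpr ⟨t, fun b => ?_⟩
  simp only [mem_centralizer_singleton_iff_conj_eq]
  have : t * b * g * (t * b)⁻¹ = t * (b * g * b⁻¹) * t⁻¹ := by group
  have htg := conj_eq_inv_of_notMem_centralizer hg ht
  have htg' : t * g⁻¹ * t⁻¹ = g := by rw [← conj_inv, htg, inv_inv]
  rw [this]
  rcases conj_eq_or_eq_inv_of_zpowers_normal hg b with h | h <;> simp [h, htg, htg', hne]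

section DihedralHom

variable {C : Subgroup G} (hC : C.index = 2) {t : G} (ht : t ∉ C) {n : ℕ} (φ : G → ZMod n)
  (hadd : ∀ x ∈ C, ∀ y ∈ C, φ (x * y) = φ x + φ y)
  (hconj : ∀ c ∈ C, φ (t⁻¹ * c * t) = -φ c) (hsq : φ (t * t) = 0)

open Classical in
noncomputable def dihedralHomOfIndexTwo : G →* DihedralGroup n where
  toFun v := if v ∈ C then .r (φ v) else .sr (φ (t⁻¹ * v))
  map_one' := by
    have : φ 1 = 0 := by simpa using hadd 1 C.one_mem 1 C.one_mem
    rw [if_pos C.one_mem, this]; rfl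
  map_mul' x y := by
    have hCn := normal_of_index_eq_two hC
    have hmem := mul_mem_iff_of_index_two hC (a := x) (b := y)
    have htx : t⁻¹ * x ∈ C ↔ x ∉ C := by simp [mul_mem_iff_of_index_two hC, ht]
    have hty : t⁻¹ * y ∈ C ↔ y ∉ C := by simp [mul_mem_iff_of_index_two hC, ht]
    by_cases hx : x ∈ C <;> by_cases hy : y ∈ C
    · simp [hx, hy, hmem, hadd x hx y hy]
    · have hxt : t⁻¹ * x * t ∈ C := by simpa using hCn.conj_mem x hx t⁻¹
      have : φ (t⁻¹ * (x * y)) = -φ x + φ (t⁻¹ * y) := by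
        rw [show t⁻¹ * (x * y) = t⁻¹ * x * t * (t⁻¹ * y) by group,
          hadd _ hxt _ (hty.mpr hy), hconj x hx]
      simp [hx, hy, hmem, this]
      ring
    · have : φ (t⁻¹ * (x * y)) = φ (t⁻¹ * x) + φ y := by
        rw [← mul_assoc, hadd _ (htx.mpr hx) _ hy]
      simp [hx, hy, hmem, this]
    · have htC : t * t ∈ C := by simp [mul_mem_iff_of_index_two hC]
      have hxt : φ (x * t) = -φ (t⁻¹ * x) := by
        have := hconj (x * t) (by simp [mul_mem_iff_of_index_two hC, hx, ht])
        rw [show t⁻¹ * (x * t) * t = t⁻¹ * x * (t * t) by group,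
          hadd _ (htx.mpr hx) _ htC, hsq] at this
        linear_combination this
      have : φ (x * y) = -φ (t⁻¹ * x) + φ (t⁻¹ * y) := by
        rw [show x * y = x * t * (t⁻¹ * y) by group,
          hadd _ (by simp [mul_mem_iff_of_index_two hC, hx, ht]) _ (hty.mpr hy), hxt]
      simp [hx, hy, hmem, this]
      ring

theorem dihedralHomOfIndexTwo_apply_of_mem {v : G} (hv : v ∈ C) :
    dihedralHomOfIndexTwo hC ht φ hadd hconj hsq v = .r (φ v) := by
  simp [dihedralHomOfIndexTwo, hv]

theorem dihedralHomOfIndexTwo_apply_of_notMem {v : G} (hv : v ∉ C) :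
    dihedralHomOfIndexTwo hC ht φ hadd hconj hsq v = .sr (φ (t⁻¹ * v)) := by
  simp [dihedralHomOfIndexTwo, hv]

theorem mem_ker_dihedralHomOfIndexTwo {v : G} :
    v ∈ (dihedralHomOfIndexTwo hC ht φ hadd hconj hsq).ker ↔ v ∈ C ∧ φ v = 0 := by
  by_cases hv : v ∈ C
  · simp [MonoidHom.mem_ker, dihedralHomOfIndexTwo_apply_of_mem _ _ _ _ _ _ hv, hv,
      ← DihedralGroup.r_zero]
  · simp [MonoidHom.mem_ker, dihedralHomOfIndexTwo_apply_of_notMem _ _ _ _ _ _ hv, hv,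
      ← DihedralGroup.r_zero]

theorem dihedralHomOfIndexTwo_surjective (hφ : ∀ i, ∃ c ∈ C, φ c = i) :
    Surjective (dihedralHomOfIndexTwo hC ht φ hadd hconj hsq) := by
  rintro (i | i) <;> obtain ⟨c, hc, rfl⟩ := hφ i
  · exact ⟨c, dihedralHomOfIndexTwo_apply_of_mem _ _ _ _ _ _ hc⟩
  · have htc : t * c ∉ C := by simp [mul_mem_iff_of_index_two hC, ht, hc]
    refine ⟨t * c, ?_⟩
    rw [dihedralHomOfIndexTwo_apply_of_notMem _ _ _ _ _ _ htc, inv_mul_cancel_left]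

end DihedralHom

theorem exists_dihedral_finite_ker_of_index_eq_two {C : Subgroup G} (hC : C.index = 2) {t : G}
    (ht : t ∉ C) (ψ : C →* Multiplicative ℤ) (hψ : Surjective ψ) [Finite ψ.ker]
    (hanti : ∀ c c' : C, (c' : G) = t⁻¹ * c * t → ψ c' = (ψ c)⁻¹) :
    ∃ Φ : G →* DihedralGroup 0, Surjective Φ ∧ Finite Φ.ker := by
  classical
  -- `ZMod 0` is `ℤ` by definition; the explicit cast keeps the two types apart for `rw`.
  let φ : G → ZMod 0 := fun v => if h : v ∈ C then Int.cast (ψ ⟨v, h⟩).toAdd else 0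
  have hφ {v : G} (hv : v ∈ C) : φ v = Int.cast (ψ ⟨v, hv⟩).toAdd := dif_pos hv
  have hadd : ∀ x ∈ C, ∀ y ∈ C, φ (x * y) = φ x + φ y := fun x hx y hy => by
    rw [hφ hx, hφ hy, hφ (mul_mem hx hy), ← Int.cast_add, ← toAdd_mul, ← map_mul]
    rfl
  have hconj : ∀ c ∈ C, φ (t⁻¹ * c * t) = -φ c := fun c hc => by
    have hc' : t⁻¹ * c * t ∈ C := by
      simpa using (normal_of_index_eq_two hC).conj_mem c hc t⁻¹
    rw [hφ hc, hφ hc', hanti ⟨c, hc⟩ ⟨_, hc'⟩ rfl, toAdd_inv, Int.cast_neg]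
  have hsq : φ (t * t) = 0 := by
    have := hconj (t * t) (mul_self_mem_of_index_two hC t)
    rw [show t⁻¹ * (t * t) * t = t * t by group] at this
    exact self_eq_neg.mp this
  refine ⟨dihedralHomOfIndexTwo hC ht φ hadd hconj hsq,
    dihedralHomOfIndexTwo_surjective _ _ _ _ _ _ fun i => ?_, ?_⟩
  · obtain ⟨k, rfl⟩ := ZMod.intCast_surjective i
    obtain ⟨c, hc⟩ := hψ (.ofAdd k)
    exact ⟨c, c.2, by rw [hφ c.2, hc]; rfl⟩
  · refine Finite.Set.subset (C.subtype '' ψ.ker) fun v hv => ?_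
    obtain ⟨hvC, hv0⟩ := (mem_ker_dihedralHomOfIndexTwo _ _ _ _ _ _).mp hv
    refine ⟨⟨v, hvC⟩, ?_, rfl⟩
    rw [hφ hvC, Int.cast_eq_zero] at hv0
    exact hv0

theorem exists_dihedral_finite_ker_of_notMem_center {g : G} (hg : ¬IsOfFinOrder g)
    [(zpowers g).Normal] [(zpowers g).FiniteIndex] (hgc : g ∉ center G) :
    ∃ Φ : G →* DihedralGroup 0, Surjective Φ ∧ Finite Φ.ker := by
  set C := centralizer {g}
  obtain ⟨t, ht⟩ := not_forall.mp (mt mem_center_iff.mpr hgc)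
  have ht : t ∉ C := mt mem_centralizer_singleton_iff.mp ht
  have hC := index_centralizer_eq_two hg ht
  let g' : C := ⟨g, mem_centralizer_singleton_iff.mpr rfl⟩
  have hg'c : g' ∈ center C := mem_center_iff.mpr fun c =>
    Subtype.ext (mem_centralizer_singleton_iff.mp c.2)
  have hg' : ¬IsOfFinOrder g' := fun h => hg (C.subtype.isOfFinOrder h)
  have : (zpowers g').FiniteIndex := ⟨fun h => FiniteIndex.index_ne_zero (H := zpowers g) <| by
    rw [← show (zpowers g').map C.subtype = zpowers g from MonoidHom.map_zpowers _ _,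
      index_map_subtype, h, zero_mul]⟩
  obtain ⟨ψ, hψ, hker⟩ := exists_surjective_int_finite_ker_of_mem_center hg' hg'c
  have : C.Normal := normal_of_index_eq_two hC
  let σ : C →* C := (MulAut.conjNormal t⁻¹).toMonoidHom
  have hσg : σ g' = g'⁻¹ := Subtype.ext <|
    conj_eq_inv_of_notMem_centralizer hg (inv_mem_iff.not.mpr ht)
  refine exists_dihedral_finite_ker_of_index_eq_two hC ht ψ hψ fun c c' hc' => ?_
  rw [show c' = σ c from Subtype.ext (by simp [σ, hc'])]
  exact ψ.map_eq_inv_of_zpowers_finiteIndex σ (by rw [hσg, map_inv]) c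

end

/-- Every virtually cyclic group is either finite, or surjects onto `ℤ` with finite
kernel, or surjects onto the infinite dihedral group `D_∞` with finite kernel. -/
theorem virtually_cyclic_trichotomy (V : Type) [Group V]
    (hvc : ∃ H : Subgroup V, IsCyclic H ∧ H.FiniteIndex) :
    Finite V ∨
    (∃ φ : V →* Multiplicative ℤ, Function.Surjective φ ∧ Finite φ.ker) ∨
    (∃ φ : V →* DihedralGroup 0, Function.Surjective φ ∧ Finite φ.ker) := by
  obtain ⟨H, hH, hHfin⟩ := hvc
  rcases finite_or_infinite V with hV | hV
  · exact .inl hV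
  obtain ⟨g, hg, hN, hfin⟩ := exists_zpowers_normal_finiteIndex_of_isCyclic H
  by_cases hgc : g ∈ center V
  · exact .inr (.inl (exists_surjective_int_finite_ker_of_mem_center hg hgc))
  · exact .inr (.inr (exists_dihedral_finite_ker_of_notMem_center hg hgc))
end

section
/- Let N be a group with a normal free abelian subgroup L ≅ ℤ^r of index 4 such that N/L ≅ ℤ/4 and N contains an element of order 4. Suppose further N contains a central element z of order 2 with N/⟨z⟩ ≅ ℤ^r ⋊ ℤ/2 (ℤ/2 acting by -1) and the preimage of ℤ^r splits back as ℤ/2 × ℤ^r. Then N ≅ ℤ^r ⋊ ℤ/4 where the generator of ℤ/4 acts on ℤ^r by multiplication by -1. -/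
/-!
Let `q : N → ℤʳ ⋊ ℤ/2` be the quotient map by `⟨z⟩`; its kernel has exponent `2`. In the
generalized dihedral group `ℤʳ ⋊ ℤ/2` every element outside `ℤʳ` is an involution, and conjugating
by such an element inverts `ℤʳ`. Since `L` is torsion-free, `q` sends `L` into `ℤʳ`, while the
element `t` of order `4` is sent outside `ℤʳ` (as `ℤʳ` is torsion-free and `t² ≠ 1`). Hence for
`a ∈ L` the element `t a t⁻¹ a` lies in `L ∩ ker q`, so it is trivial: `t` acts on `L` by
inversion. Finally `⟨t⟩ ≅ ℤ/4` meets the torsion-free `L` trivially and has order `[N : L]`, so it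
is a complement of `L`, and `N ≅ L ⋊ ⟨t⟩ ≅ ℤʳ ⋊ ℤ/4`.
-/

section PowZMod

variable {M : Type*} [Monoid M]

def powZModHom (n : ℕ) [NeZero n] (g : M) (hg : g ^ n = 1) : Multiplicative (ZMod n) →* M where
  toFun c := g ^ (Multiplicative.toAdd c).val
  map_one' := by simp
  map_mul' a b := by
    rw [toAdd_mul, ZMod.val_add, ← pow_add, ← pow_mod_orderOf,
      Nat.mod_mod_of_dvd _ (orderOf_dvd_of_pow_eq_one hg), pow_mod_orderOf]

end PowZMod

section NegOnePowAction

variable (A : Type*) [CommGroup A]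

lemma MulEquiv.inv_pow_apply (k : ℕ) (a : A) :
    ((MulEquiv.inv A : MulAut A) ^ k) a = a ^ ((-1 : ℤ) ^ k) := by
  induction k generalizing a with
  | zero => simp
  | succ k ih =>
    rw [pow_succ', MulAut.mul_apply, ih, MulEquiv.inv_apply, ← zpow_neg, pow_succ, mul_neg_one]

def negOnePowAction (n : ℕ) [NeZero n] (hn : Even n) : Multiplicative (ZMod n) →* MulAut A :=
  powZModHom n (MulEquiv.inv A) <| MulEquiv.ext fun a => by
    rw [MulEquiv.inv_pow_apply, hn.neg_one_pow, zpow_one, MulAut.one_apply]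

lemma negOnePowAction_apply (n : ℕ) [NeZero n] (hn : Even n) (c : Multiplicative (ZMod n))
    (a : A) : negOnePowAction A n hn c a = a ^ ((-1 : ℤ) ^ (Multiplicative.toAdd c).val) :=
  MulEquiv.inv_pow_apply A _ a

end NegOnePowAction

namespace SemidirectProduct

lemma eq_one_of_pow_eq_one_of_right_eq_one {A G : Type*} [Group A] [Group G] [IsMulTorsionFree A]
    {φ : G →* MulAut A} {x : A ⋊[φ] G} (hx : x.right = 1) {n : ℕ} (hn : n ≠ 0)
    (h : x ^ n = 1) : x = 1 := by
  have hx' : x = inl x.left := by ext <;> simp [hx]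
  rw [hx', ← map_pow, ← map_one inl, inl_inj] at h
  rw [hx', pow_eq_one_iff_left hn |>.mp h, map_one]

variable {A : Type*} [CommGroup A]

lemma mul_self_eq_one_of_right_ne_one
    {x : A ⋊[negOnePowAction A 2 even_two] Multiplicative (ZMod 2)} (hx : x.right ≠ 1) :
    x * x = 1 := by
  have hx1 : Multiplicative.toAdd x.right = 1 := by
    have : ∀ c : ZMod 2, c ≠ 0 → c = 1 := by decide
    exact this _ hx
  ext
  · have : (-1 : ℤ) ^ (1 : ZMod 2).val = -1 := rfl
    simp [mul_left, negOnePowAction_apply, hx1, this]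
  · show Multiplicative.toAdd x.right + Multiplicative.toAdd x.right = 0
    rw [hx1]; decide

lemma conj_eq_inv_of_right_ne_one
    {y b : A ⋊[negOnePowAction A 2 even_two] Multiplicative (ZMod 2)} (hy : y.right ≠ 1)
    (hb : b.right = 1) : y * b * y⁻¹ = b⁻¹ := by
  have hyb : (y * b).right ≠ 1 := by rwa [mul_right, hb, mul_one]
  rw [← mul_eq_one_iff_eq_inv, inv_eq_of_mul_eq_one_right (mul_self_eq_one_of_right_ne_one hy)]
  simpa only [mul_assoc] using mul_self_eq_one_of_right_ne_one hyb

end SemidirectProduct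

namespace Subgroup

variable {G : Type*} [Group G]

lemma eq_one_of_pow_eq_one {H : Subgroup G} [IsMulTorsionFree H] {x : G} (hx : x ∈ H) {n : ℕ}
    (hn : n ≠ 0) (h : x ^ n = 1) : x = 1 := by
  have : (⟨x, hx⟩ : H) ^ n = 1 := Subtype.ext (by simpa using h)
  simpa using congrArg Subtype.val ((pow_eq_one_iff_left hn).mp this)

lemma disjoint_zpowers_of_isMulTorsionFree {H : Subgroup G} [IsMulTorsionFree H] {g : G}
    (hg : IsOfFinOrder g) : Disjoint H (zpowers g) :=
  disjoint_def.mpr fun hx hxg => eq_one_of_pow_eq_one hx hg.orderOf_pos.ne'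
    (orderOf_dvd_iff_pow_eq_one.mp (orderOf_dvd_of_mem_zpowers hxg))

lemma isComplement'_of_disjoint_of_card_eq_index {H K : Subgroup G} (hidx : H.index ≠ 0)
    (hd : Disjoint H K) (hc : Nat.card K = H.index) : H.IsComplement' K := by
  have : Finite (G ⧸ H) := index_ne_zero_iff_finite.mp hidx
  refine IsComplement'.symm (isComplement_subgroup_right_iff_bijective.mpr ?_)
  refine Function.Injective.bijective_of_nat_card_le ?_ hc.ge
  rintro ⟨x, hx⟩ ⟨y, hy⟩ hxy
  have h1 : x⁻¹ * y = 1 :=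
    disjoint_def.mp hd (QuotientGroup.eq.mp hxy) (mul_mem (inv_mem hx) hy)
  exact Subtype.ext (inv_mul_eq_one.mp h1)

lemma conj_pow_eq_zpow_neg_one_pow {H : Subgroup G} {t : G}
    (ht : ∀ a ∈ H, t * a * t⁻¹ = a⁻¹) (k : ℕ) {a : G} (ha : a ∈ H) :
    t ^ k * a * (t ^ k)⁻¹ = a ^ ((-1 : ℤ) ^ k) := by
  induction k with
  | zero => simp
  | succ k ih =>
    calc t ^ (k + 1) * a * (t ^ (k + 1))⁻¹ = t * (t ^ k * a * (t ^ k)⁻¹) * t⁻¹ := by group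
      _ = a ^ ((-1 : ℤ) ^ (k + 1)) := by
        rw [ih, ht _ (zpow_mem ha _), ← zpow_neg, pow_succ, mul_neg_one]

end Subgroup

open Subgroup in
theorem nonempty_mulEquiv_semidirectProduct_negOnePowAction {G A : Type*} [Group G]
    [CommGroup A] {L : Subgroup G} [L.Normal] (eL : L ≃* A) {n : ℕ} [NeZero n] (hn : Even n)
    {t : G} (ht : orderOf t = n) (hidx : L.index = n) (hd : Disjoint L (zpowers t))
    (hinv : ∀ a ∈ L, t * a * t⁻¹ = a⁻¹) :
    Nonempty (G ≃* A ⋊[negOnePowAction A n hn] Multiplicative (ZMod n)) := by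
  have hc : L.IsComplement' (zpowers t) :=
    isComplement'_of_disjoint_of_card_eq_index (hidx ▸ NeZero.ne n) hd
      (by rw [Nat.card_zpowers, ht, hidx])
  let fg : Multiplicative (ZMod n) ≃* zpowers t :=
    zmodMulEquivOfGenerator (g := ⟨t, mem_zpowers t⟩)
      (by rintro ⟨_, k, rfl⟩; exact ⟨k, Subtype.ext (by simp)⟩) (by rw [Nat.card_zpowers, ht])
  have hfg : ∀ c, (fg c : G) = t ^ (Multiplicative.toAdd c).val := by
    intro c
    have hc : c = Multiplicative.ofAdd (((Multiplicative.toAdd c).val : ℤ) : ZMod n) := by simp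
    conv_lhs => rw [hc, zmodMulEquivOfGenerator_apply_ofAdd_intCast]
    rw [zpow_natCast, SubgroupClass.coe_pow]
  refine ⟨(SemidirectProduct.mulEquivSubgroup hc).symm.trans
    (SemidirectProduct.congr eL fg.symm fun g => ?_)⟩
  obtain ⟨c, rfl⟩ := fg.surjective g
  ext a
  simp only [MulEquiv.trans_apply, MulEquiv.symm_apply_apply, negOnePowAction_apply]
  rw [← map_zpow]
  congr 1
  ext
  rw [MonoidHom.comp_apply, normalizerMonoidHom_apply_apply_coe, coe_inclusion, hfg,
    SubgroupClass.coe_zpow]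
  exact conj_pow_eq_zpow_neg_one_pow hinv _ a.2

section DihedralQuotient

open SemidirectProduct Subgroup

variable {N A : Type*} [Group N] [CommGroup A]
  (q : N →* A ⋊[negOnePowAction A 2 even_two] Multiplicative (ZMod 2))
  {L : Subgroup N}

lemma right_map_eq_one_of_mem (hq : ∀ x, q x = 1 → x ^ 2 = 1) [IsMulTorsionFree L] {a : N}
    (ha : a ∈ L) : (q a).right = 1 := by
  by_contra h
  have ha4 : a ^ 4 = 1 := by
    rw [show 4 = 2 * 2 from rfl, pow_mul]
    exact hq _ (by rw [map_pow, sq, mul_self_eq_one_of_right_ne_one h])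
  exact h (by rw [eq_one_of_pow_eq_one ha four_ne_zero ha4, map_one, one_right])

lemma right_map_ne_one_of_orderOf_eq_four [IsMulTorsionFree A]
    (hq : ∀ x, q x = 1 → x ^ 2 = 1) {t : N} (ht : orderOf t = 4) :
    (q t).right ≠ 1 := by
  intro h
  have hqt : q t = 1 := eq_one_of_pow_eq_one_of_right_eq_one h four_ne_zero
    (by rw [← map_pow, ← ht, pow_orderOf_eq_one, map_one])
  have := orderOf_le_of_pow_eq_one two_pos (hq t hqt)
  omega

lemma conj_eq_inv_of_mem [IsMulTorsionFree A] (hq : ∀ x, q x = 1 → x ^ 2 = 1)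
    [IsMulTorsionFree L] [L.Normal] {t : N} (ht : orderOf t = 4) {a : N}
    (ha : a ∈ L) : t * a * t⁻¹ = a⁻¹ := by
  have hmem : t * a * t⁻¹ * a ∈ L := mul_mem (Normal.conj_mem ‹_› a ha t) ha
  have hq1 : q (t * a * t⁻¹ * a) = 1 := by
    rw [map_mul, map_mul, map_mul, map_inv, conj_eq_inv_of_right_ne_one
      (right_map_ne_one_of_orderOf_eq_four q hq ht) (right_map_eq_one_of_mem q hq ha),
      inv_mul_cancel]
  exact mul_eq_one_iff_eq_inv.mp (eq_one_of_pow_eq_one hmem two_ne_zero (hq _ hq1))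

end DihedralQuotient

theorem normalizer_structure_general (r : ℕ) (N : Type) [Group N]
    (L : Subgroup N) [L.Normal]
    (eL : Nonempty (L ≃* Multiplicative (Fin r → ℤ)))
    (hidx : L.index = 4)
    (ht : ∃ t : N, orderOf t = 4)
    (z : N) (hzo : orderOf z = 2)
    [(Subgroup.zpowers z).Normal]
    (hquot : ∃ ψ : Multiplicative (ZMod 2) →* MulAut (Multiplicative (Fin r → ℤ)),
      (∀ (c : Multiplicative (ZMod 2)) (a : Multiplicative (Fin r → ℤ)),
        ψ c a = a ^ ((-1 : ℤ) ^ (Multiplicative.toAdd c).val)) ∧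
      ∃ e : (N ⧸ Subgroup.zpowers z) ≃*
          Multiplicative (Fin r → ℤ) ⋊[ψ] Multiplicative (ZMod 2),
        Nonempty
          ((Subgroup.comap
              ((e.toMonoidHom).comp (QuotientGroup.mk' (Subgroup.zpowers z)))
              (SemidirectProduct.inl.range)) ≃*
            Multiplicative (ZMod 2) × Multiplicative (Fin r → ℤ))) :
    ∃ φ : Multiplicative (ZMod 4) →* MulAut (Multiplicative (Fin r → ℤ)),
      (∀ (c : Multiplicative (ZMod 4)) (a : Multiplicative (Fin r → ℤ)),
        φ c a = a ^ ((-1 : ℤ) ^ (Multiplicative.toAdd c).val)) ∧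
      Nonempty (N ≃* Multiplicative (Fin r → ℤ) ⋊[φ] Multiplicative (ZMod 4)) := by
  obtain ⟨eL⟩ := eL
  obtain ⟨t, ht⟩ := ht
  obtain ⟨ψ, hψ, e, -⟩ := hquot
  obtain rfl : ψ = negOnePowAction _ 2 even_two :=
    MonoidHom.ext fun c => MulEquiv.ext fun a => by rw [hψ, negOnePowAction_apply]
  have : IsMulTorsionFree L := Function.Injective.isMulTorsionFree eL.toMonoidHom eL.injective
  let q := e.toMonoidHom.comp (QuotientGroup.mk' (Subgroup.zpowers z))
  have hq : ∀ x, q x = 1 → x ^ 2 = 1 := fun x hx => by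
    have hxz : x ∈ Subgroup.zpowers z := (QuotientGroup.eq_one_iff x).mp (e.map_eq_one_iff.mp hx)
    rw [← orderOf_dvd_iff_pow_eq_one, ← hzo]
    exact orderOf_dvd_of_mem_zpowers hxz
  have h4 : Even 4 := by decide
  have hdisj : Disjoint L (Subgroup.zpowers t) :=
    Subgroup.disjoint_zpowers_of_isMulTorsionFree (orderOf_pos_iff.mp (by omega))
  exact ⟨negOnePowAction _ 4 h4, negOnePowAction_apply _ 4 h4,
    nonempty_mulEquiv_semidirectProduct_negOnePowAction eL h4 ht hidx hdisj
      fun a ha => conj_eq_inv_of_mem q hq ht ha⟩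

/-- Let `N` be a group with a normal free abelian subgroup `L ≅ ℤʳ` of index `4`,
`N/L ≅ ℤ/4`, containing an element of order `4`, and containing a central element `z` of
order `2` with `N/⟨z⟩ ≅ ℤʳ ⋊ ℤ/2` (the involution acting by `-1`) such that the preimage
of the `ℤʳ`-factor splits back as `ℤ/2 × ℤʳ`.  Then `N ≅ ℤʳ ⋊ ℤ/4`, where the generator
of `ℤ/4` acts on `ℤʳ` by multiplication by `-1`. -/
theorem normalizer_structure (r : ℕ) (N : Type) [Group N]
    (L : Subgroup N) [L.Normal]
    (eL : Nonempty (L ≃* Multiplicative (Fin r → ℤ)))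
    (hidx : L.index = 4)
    (eQ : Nonempty ((N ⧸ L) ≃* Multiplicative (ZMod 4)))
    (ht : ∃ t : N, orderOf t = 4)
    (z : N) (hz : z ∈ Subgroup.center N) (hzo : orderOf z = 2)
    [(Subgroup.zpowers z).Normal]
    (hquot : ∃ ψ : Multiplicative (ZMod 2) →* MulAut (Multiplicative (Fin r → ℤ)),
      (∀ (c : Multiplicative (ZMod 2)) (a : Multiplicative (Fin r → ℤ)),
        ψ c a = a ^ ((-1 : ℤ) ^ (Multiplicative.toAdd c).val)) ∧
      ∃ e : (N ⧸ Subgroup.zpowers z) ≃*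
          Multiplicative (Fin r → ℤ) ⋊[ψ] Multiplicative (ZMod 2),
        Nonempty
          ((Subgroup.comap
              ((e.toMonoidHom).comp (QuotientGroup.mk' (Subgroup.zpowers z)))
              (SemidirectProduct.inl.range)) ≃*
            Multiplicative (ZMod 2) × Multiplicative (Fin r → ℤ))) :
    ∃ φ : Multiplicative (ZMod 4) →* MulAut (Multiplicative (Fin r → ℤ)),
      (∀ (c : Multiplicative (ZMod 4)) (a : Multiplicative (Fin r → ℤ)),
        φ c a = a ^ ((-1 : ℤ) ^ (Multiplicative.toAdd c).val)) ∧
      Nonempty (N ≃* Multiplicative (Fin r → ℤ) ⋊[φ] Multiplicative (ZMod 4)) :=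
  normalizer_structure_general r N L eL hidx ht z hzo hquot
end
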